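/- Let n, k be integers with k ≤ n^{1/4}, and for C ⊆ [n] let U_n^C denote the uniform distribution on {x ∈ {0,1}^n : x_i = 1 for all i ∈ C}. Then for every function f : {0,1}^n → {0,1}, E_{C ∼ S_k^{[n]}}[ ‖f(U_n) − f(U_n^C)‖ ] ≤ O(k/√n), where S_k^{[n]} is the uniform distribution over size-k subsets of [n] and U_n is uniform on {0,1}^n. -/

import Mathlib

/-!
Write `μ_T g` for the average of `g` over the subcube `{x | ∀ i ∈ T, x i = true}`. For `i ∉ T`,
`μ_{insert i T} g - μ_T g` is the correlation of `g` with the character `χ_i = ±1` on that subcube,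
normalised by its size, and the characters `χ_i` (`i ∉ T`) are orthogonal there; by Cauchy–Schwarz,
`∑_{i ∉ T} |μ_T g - μ_{insert i T} g| ≤ √(n - #T)` whenever `|g| ≤ 1`.
A uniform `k`-set is a uniform `(k-1)`-set plus a uniform new coordinate, so by the triangle
inequality the expected distance from `μ_∅ g` grows by at most `1 / √(n - j)` at step `j`, and
`∑_{j < k} 1 / √(n - j) ≤ 2 (√n - √(n - k)) ≤ 2k / √n`.
-/

open Finset

theorem sum_sq_sum_mul_of_orthogonal {X ι : Type*} [DecidableEq ι] (A : Finset X) (I : Finset ι)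
    (e : ι → X → ℝ) (m : ℝ)
    (horth : ∀ i ∈ I, ∀ j ∈ I, ∑ x ∈ A, e i x * e j x = if i = j then m else 0) (a : ι → ℝ) :
    ∑ x ∈ A, (∑ i ∈ I, a i * e i x) ^ 2 = m * ∑ i ∈ I, a i ^ 2 := by
  calc ∑ x ∈ A, (∑ i ∈ I, a i * e i x) ^ 2
      = ∑ i ∈ I, ∑ j ∈ I, a i * a j * ∑ x ∈ A, e i x * e j x := by
        simp_rw [sq, sum_mul_sum, mul_sum]
        rw [sum_comm]
        refine sum_congr rfl fun i _ => ?_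
        rw [sum_comm]
        exact sum_congr rfl fun j _ => sum_congr rfl fun x _ => by ring
    _ = m * ∑ i ∈ I, a i ^ 2 := by
        rw [mul_sum]
        refine sum_congr rfl fun i hi => ?_
        rw [sum_congr rfl fun j hj => congrArg (a i * a j * ·) (horth i hi j hj)]
        simp_rw [mul_ite, mul_zero, sum_ite_eq I i, if_pos hi]
        ring

theorem sum_abs_sum_mul_le_of_orthogonal {X ι : Type*} [DecidableEq ι] (A : Finset X)
    (I : Finset ι) (e : ι → X → ℝ) (m : ℝ)
    (horth : ∀ i ∈ I, ∀ j ∈ I, ∑ x ∈ A, e i x * e j x = if i = j then m else 0) (g : X → ℝ) :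
    ∑ i ∈ I, |∑ x ∈ A, g x * e i x| ≤ √(∑ x ∈ A, g x ^ 2) * √(m * #I) := by
  -- Pair `g` with the single test function `∑ i, ± e i` whose signs match those of the correlations.
  set s : ι → ℝ := fun i => if 0 ≤ ∑ x ∈ A, g x * e i x then 1 else -1
  have hs_abs : ∀ i, |∑ x ∈ A, g x * e i x| = s i * ∑ x ∈ A, g x * e i x := fun i => by
    by_cases h : 0 ≤ ∑ x ∈ A, g x * e i x
    · simp [s, h, abs_of_nonneg h]
    · simp [s, h, abs_of_neg (not_le.1 h)]
  have hs_sq : ∀ i, s i ^ 2 = 1 := fun i => by by_cases h : 0 ≤ ∑ x ∈ A, g x * e i x <;> simp [s, h]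
  calc ∑ i ∈ I, |∑ x ∈ A, g x * e i x|
      = ∑ x ∈ A, g x * ∑ i ∈ I, s i * e i x := by
        simp_rw [hs_abs, mul_sum]
        rw [sum_comm]
        exact sum_congr rfl fun i _ => sum_congr rfl fun x _ => by ring
    _ ≤ √(∑ x ∈ A, g x ^ 2) * √(∑ x ∈ A, (∑ i ∈ I, s i * e i x) ^ 2) :=
        Real.sum_mul_le_sqrt_mul_sqrt A _ _
    _ = √(∑ x ∈ A, g x ^ 2) * √(m * #I) := by
        rw [sum_sq_sum_mul_of_orthogonal A I e m horth, sum_congr rfl fun i _ => hs_sq i]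
        simp

theorem sum_powersetCard_sum_compl_insert {α M : Type*} [Fintype α] [DecidableEq α]
    [AddCommMonoid M] (k : ℕ) (h : Finset α → M) :
    ∑ T ∈ powersetCard k univ, ∑ i ∈ Tᶜ, h (insert i T)
      = (k + 1) • ∑ S ∈ powersetCard (k + 1) univ, h S := by
  have hcard : ∀ S ∈ powersetCard (k + 1) (univ : Finset α), ∑ _i ∈ S, h S = (k + 1) • h S :=
    fun S hS => by rw [sum_const, (mem_powersetCard.1 hS).2]
  rw [smul_sum, ← sum_congr rfl hcard, sum_sigma', sum_sigma']
  refine sum_nbij' (fun p => ⟨insert p.2 p.1, p.2⟩) (fun p => ⟨p.1.erase p.2, p.2⟩)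
    ?_ ?_ ?_ ?_ fun _ _ => rfl
  · rintro ⟨T, i⟩ hp
    simp only [mem_sigma, mem_powersetCard, mem_compl] at hp ⊢
    exact ⟨⟨subset_univ _, by rw [card_insert_of_notMem hp.2, hp.1.2]⟩, mem_insert_self i T⟩
  · rintro ⟨S, i⟩ hp
    simp only [mem_sigma, mem_powersetCard, mem_compl] at hp ⊢
    exact ⟨⟨subset_univ _, by rw [card_erase_of_mem hp.2, hp.1.2, Nat.add_sub_cancel]⟩,
      notMem_erase i S⟩
  · rintro ⟨T, i⟩ hp
    simp only [mem_sigma, mem_compl] at hp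
    simp [erase_insert hp.2]
  · rintro ⟨S, i⟩ hp
    simp only [mem_sigma] at hp
    simp [insert_erase hp.2]

theorem sqrt_le_two_mul_mul_sub_sqrt_sub_one {m : ℝ} (hm : 1 ≤ m) :
    √m ≤ 2 * m * (√m - √(m - 1)) := by
  have ha := Real.sq_sqrt (by linarith : 0 ≤ m)
  have hb := Real.sq_sqrt (by linarith : 0 ≤ m - 1)
  have hba : √(m - 1) ≤ √m := Real.sqrt_le_sqrt (by linarith)
  -- `2m(√m - √(m-1)) - √m = √m (√m - √(m-1))²`, using `(√m - √(m-1))(√m + √(m-1)) = 1`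
  nlinarith [mul_nonneg (Real.sqrt_nonneg m) (sq_nonneg (√m - √(m - 1))), Real.sqrt_nonneg (m - 1)]

theorem sqrt_sub_sqrt_sub_le_div_sqrt {a b : ℝ} (hb : 0 ≤ b) (hba : b ≤ a) :
    √a - √(a - b) ≤ b / √a := by
  rcases (Real.sqrt_nonneg a).eq_or_lt with ha | ha
  · rw [← ha, div_zero, sub_nonpos]
    exact Real.sqrt_nonneg _
  rw [le_div_iff₀ ha]
  have hab := Real.sq_sqrt (by linarith : 0 ≤ a - b)
  nlinarith [Real.sq_sqrt (hb.trans hba), Real.sqrt_nonneg (a - b)]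

namespace BooleanCube

variable {n : ℕ}

def subcube (T : Finset (Fin n)) : Finset (Fin n → Bool) :=
  univ.filter fun x => ∀ i ∈ T, x i = true

noncomputable def subcubeAvg (g : (Fin n → Bool) → ℝ) (T : Finset (Fin n)) : ℝ :=
  (∑ x ∈ subcube T, g x) / #(subcube T)

noncomputable def chi (i : Fin n) (x : Fin n → Bool) : ℝ :=
  if x i then 1 else -1

def flipAt (i : Fin n) (x : Fin n → Bool) : Fin n → Bool :=
  Function.update x i (!x i)

theorem mem_subcube {T : Finset (Fin n)} {x : Fin n → Bool} :
    x ∈ subcube T ↔ ∀ i ∈ T, x i = true := by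
  simp [subcube]

theorem subcube_empty : subcube (∅ : Finset (Fin n)) = univ := by
  simp [subcube]

theorem subcube_nonempty (T : Finset (Fin n)) : (subcube T).Nonempty :=
  ⟨fun _ => true, mem_subcube.2 fun _ _ => rfl⟩

theorem subcube_insert (i : Fin n) (T : Finset (Fin n)) :
    subcube (insert i T) = (subcube T).filter fun x => x i = true := by
  ext x
  simp [mem_subcube, and_comm]

theorem flipAt_flipAt (i : Fin n) (x : Fin n → Bool) : flipAt i (flipAt i x) = x := by
  simp [flipAt]

theorem flipAt_ne (i : Fin n) (x : Fin n → Bool) : flipAt i x ≠ x :=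
  fun h => by simpa [flipAt] using congrFun h i

theorem flipAt_apply_of_ne {i j : Fin n} (h : j ≠ i) (x : Fin n → Bool) :
    flipAt i x j = x j :=
  Function.update_of_ne h _ _

theorem flipAt_mem_subcube {T : Finset (Fin n)} {i : Fin n} (hi : i ∉ T) {x : Fin n → Bool}
    (hx : x ∈ subcube T) : flipAt i x ∈ subcube T :=
  mem_subcube.2 fun j hj => by
    rw [flipAt_apply_of_ne (ne_of_mem_of_not_mem hj hi)]
    exact mem_subcube.1 hx j hj

theorem chi_flipAt_self (i : Fin n) (x : Fin n → Bool) : chi i (flipAt i x) = -chi i x := by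
  cases h : x i <;> simp [chi, flipAt, h]

theorem chi_flipAt_of_ne {i j : Fin n} (h : j ≠ i) (x : Fin n → Bool) :
    chi j (flipAt i x) = chi j x := by
  simp [chi, flipAt_apply_of_ne h]

theorem sum_subcube_chi_mul_eq_zero {T : Finset (Fin n)} {i : Fin n} (hi : i ∉ T)
    {h : (Fin n → Bool) → ℝ} (hh : ∀ x, h (flipAt i x) = h x) :
    ∑ x ∈ subcube T, chi i x * h x = 0 := by
  refine sum_involution (fun x _ => flipAt i x) (fun x _ => ?_) (fun x _ _ => flipAt_ne i x)
    (fun x hx => flipAt_mem_subcube hi hx) (fun x _ => flipAt_flipAt i x)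
  rw [chi_flipAt_self, hh]
  ring

theorem sum_subcube_chi_mul_chi {T : Finset (Fin n)} {i j : Fin n} (hi : i ∉ T) :
    ∑ x ∈ subcube T, chi i x * chi j x = if i = j then (#(subcube T) : ℝ) else 0 := by
  split_ifs with hij
  · subst hij
    have hsq : ∀ x, chi i x * chi i x = 1 := fun x => by unfold chi; split <;> norm_num
    simp [hsq]
  · exact sum_subcube_chi_mul_eq_zero hi fun x => chi_flipAt_of_ne (Ne.symm hij) x

theorem sum_subcube_insert (g : (Fin n → Bool) → ℝ) (i : Fin n) (T : Finset (Fin n)) :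
    ∑ x ∈ subcube (insert i T), g x
      = (∑ x ∈ subcube T, g x + ∑ x ∈ subcube T, g x * chi i x) / 2 := by
  rw [subcube_insert, sum_filter, ← sum_add_distrib, sum_div]
  refine sum_congr rfl fun x _ => ?_
  cases h : x i <;> simp [chi, h]

theorem card_subcube_insert {T : Finset (Fin n)} {i : Fin n} (hi : i ∉ T) :
    (#(subcube (insert i T)) : ℝ) = #(subcube T) / 2 := by
  have h := sum_subcube_insert (fun _ => 1) i T
  have hchi := sum_subcube_chi_mul_eq_zero (h := fun _ => 1) hi fun _ => rfl
  simp only [sum_const, nsmul_eq_mul, mul_one, one_mul] at h hchi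
  rwa [hchi, add_zero] at h

theorem subcubeAvg_insert_sub {T : Finset (Fin n)} {i : Fin n} (hi : i ∉ T)
    (g : (Fin n → Bool) → ℝ) :
    subcubeAvg g (insert i T) - subcubeAvg g T
      = (∑ x ∈ subcube T, g x * chi i x) / #(subcube T) := by
  have hm : (#(subcube T) : ℝ) ≠ 0 := by exact_mod_cast (subcube_nonempty T).card_pos.ne'
  unfold subcubeAvg
  rw [sum_subcube_insert, card_subcube_insert hi]
  field_simp
  ring

theorem sum_abs_subcubeAvg_sub_insert_le {g : (Fin n → Bool) → ℝ} (hg : ∀ x, |g x| ≤ 1)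
    (T : Finset (Fin n)) :
    ∑ i ∈ Tᶜ, |subcubeAvg g T - subcubeAvg g (insert i T)| ≤ √(#Tᶜ : ℝ) := by
  set m : ℝ := (#(subcube T) : ℝ)
  have hm : 0 < m := Nat.cast_pos.2 (subcube_nonempty T).card_pos
  have hg_sq : ∑ x ∈ subcube T, g x ^ 2 ≤ m := by
    calc ∑ x ∈ subcube T, g x ^ 2 ≤ ∑ _x ∈ subcube T, (1 : ℝ) :=
          sum_le_sum fun x _ => by
            rw [← sq_abs]
            exact pow_le_one₀ (abs_nonneg _) (hg x)
      _ = m := by simp [m]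
  have horth : ∀ i ∈ Tᶜ, ∀ j ∈ Tᶜ, ∑ x ∈ subcube T, chi i x * chi j x = if i = j then m else 0 :=
    fun i hi _ _ => sum_subcube_chi_mul_chi (mem_compl.1 hi)
  calc ∑ i ∈ Tᶜ, |subcubeAvg g T - subcubeAvg g (insert i T)|
      = (∑ i ∈ Tᶜ, |∑ x ∈ subcube T, g x * chi i x|) / m := by
        rw [sum_div]
        refine sum_congr rfl fun i hi => ?_
        rw [abs_sub_comm, subcubeAvg_insert_sub (mem_compl.1 hi), abs_div, abs_of_pos hm]
    _ ≤ (√m * √(m * #Tᶜ)) / m := by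
        gcongr
        exact (sum_abs_sum_mul_le_of_orthogonal _ _ chi m horth g).trans
          (mul_le_mul_of_nonneg_right (Real.sqrt_le_sqrt hg_sq) (Real.sqrt_nonneg _))
    _ = √(#Tᶜ : ℝ) := by
        rw [Real.sqrt_mul hm.le, ← mul_assoc, Real.mul_self_sqrt hm.le]
        field_simp

theorem sum_abs_sub_subcubeAvg_insert_le {g : (Fin n → Bool) → ℝ} (hg : ∀ x, |g x| ≤ 1)
    (a : ℝ) (T : Finset (Fin n)) :
    ∑ i ∈ Tᶜ, |a - subcubeAvg g (insert i T)|
      ≤ #Tᶜ * |a - subcubeAvg g T| + √(#Tᶜ : ℝ) :=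
  calc ∑ i ∈ Tᶜ, |a - subcubeAvg g (insert i T)|
      ≤ ∑ i ∈ Tᶜ, (|a - subcubeAvg g T| + |subcubeAvg g T - subcubeAvg g (insert i T)|) :=
        sum_le_sum fun _ _ => abs_sub_le _ _ _
    _ ≤ #Tᶜ * |a - subcubeAvg g T| + √(#Tᶜ : ℝ) := by
        rw [sum_add_distrib, sum_const, nsmul_eq_mul]
        gcongr
        exact sum_abs_subcubeAvg_sub_insert_le hg T

theorem sum_powersetCard_abs_subcubeAvg_sub_le {g : (Fin n → Bool) → ℝ} (hg : ∀ x, |g x| ≤ 1)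
    {k : ℕ} (hk : k ≤ n) :
    ∑ S ∈ powersetCard k univ, |subcubeAvg g ∅ - subcubeAvg g S|
      ≤ n.choose k * (2 * (√n - √(n - k))) := by
  induction k with
  | zero => simp
  | succ k ih =>
    set N : ℝ := n - k
    have hN : 1 ≤ N := by
      simp only [N, le_sub_iff_add_le]
      exact_mod_cast Nat.add_comm 1 k ▸ hk
    have hcompl : ∀ T ∈ powersetCard k (univ : Finset (Fin n)), (#Tᶜ : ℝ) = N := fun T hT => by
      rw [card_compl, Fintype.card_fin, (mem_powersetCard.1 hT).2, Nat.cast_sub (by omega)]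
    have hchoose : ((k : ℝ) + 1) * n.choose (k + 1) = N * n.choose k := by
      have h := congrArg (Nat.cast (R := ℝ)) (Nat.choose_succ_right_eq n k)
      push_cast [Nat.cast_sub (by omega : k ≤ n)] at h
      linarith
    have hstep : ((k : ℝ) + 1) * ∑ S ∈ powersetCard (k + 1) univ, |subcubeAvg g ∅ - subcubeAvg g S|
        ≤ ((k : ℝ) + 1) * (n.choose (k + 1) * (2 * (√n - √(N - 1)))) :=
      calc ((k : ℝ) + 1) * ∑ S ∈ powersetCard (k + 1) univ, |subcubeAvg g ∅ - subcubeAvg g S|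
          = ∑ T ∈ powersetCard k univ, ∑ i ∈ Tᶜ, |subcubeAvg g ∅ - subcubeAvg g (insert i T)| := by
            rw [sum_powersetCard_sum_compl_insert k fun S => |subcubeAvg g ∅ - subcubeAvg g S|,
              nsmul_eq_mul]
            push_cast
            ring
        _ ≤ ∑ T ∈ powersetCard k univ, (N * |subcubeAvg g ∅ - subcubeAvg g T| + √N) :=
            sum_le_sum fun T hT => by
              rw [← hcompl T hT]
              exact sum_abs_sub_subcubeAvg_insert_le hg _ T
        _ = N * ∑ T ∈ powersetCard k univ, |subcubeAvg g ∅ - subcubeAvg g T|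
              + n.choose k * √N := by
            rw [sum_add_distrib, ← mul_sum, sum_const, card_powersetCard, card_univ,
              Fintype.card_fin, nsmul_eq_mul]
        _ ≤ N * (n.choose k * (2 * (√n - √N))) + n.choose k * √N := by
            gcongr
            exact ih (by omega)
        _ ≤ N * n.choose k * (2 * (√n - √(N - 1))) := by
            have := mul_le_mul_of_nonneg_left (sqrt_le_two_mul_mul_sub_sqrt_sub_one hN)
              (Nat.cast_nonneg (α := ℝ) (n.choose k))
            linarith
        _ = ((k : ℝ) + 1) * (n.choose (k + 1) * (2 * (√n - √(N - 1)))) := by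
            linear_combination (-2 * (√n - √(N - 1))) * hchoose
    have hsub : (n : ℝ) - (k + 1 : ℕ) = N - 1 := by
      simp only [N]
      push_cast
      ring
    rw [hsub]
    exact le_of_mul_le_mul_left hstep (by positivity)

theorem subcubeAvg_empty (g : (Fin n → Bool) → ℝ) :
    subcubeAvg g ∅ = (∑ x, g x) / 2 ^ n := by
  simp [subcubeAvg, subcube_empty]

end BooleanCube

open BooleanCube

theorem stmt16 : ∃ C : ℝ, 0 < C ∧ ∀ (n k : ℕ),
    (k : ℝ) ≤ (n : ℝ) ^ ((1:ℝ)/4) →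
    ∀ f : (Fin n → Bool) → Bool,
    (1 / (n.choose k : ℝ)) *
      ∑ S ∈ (Finset.univ : Finset (Fin n)).powersetCard k,
        |(∑ x : Fin n → Bool, if f x then (1:ℝ) else 0) / 2 ^ n -
          (∑ x ∈ Finset.univ.filter (fun x : Fin n → Bool => ∀ i ∈ S, x i = true),
            if f x then (1:ℝ) else 0) /
            (Finset.univ.filter (fun x : Fin n → Bool => ∀ i ∈ S, x i = true)).card|
    ≤ C * k / Real.sqrt n := by
  refine ⟨2, two_pos, fun n k _ f => ?_⟩
  set g : (Fin n → Bool) → ℝ := fun x => if f x then 1 else 0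
  have hg : ∀ x, |g x| ≤ 1 := fun x => by by_cases h : f x <;> simp [g, h]
  change 1 / _ * ∑ S ∈ _, |_ - subcubeAvg g S| ≤ _
  rw [← subcubeAvg_empty]
  rcases le_or_gt k n with hkn | hnk
  · have hchoose : (0 : ℝ) < n.choose k := Nat.cast_pos.2 (Nat.choose_pos hkn)
    calc 1 / (n.choose k : ℝ) * ∑ S ∈ powersetCard k univ, |subcubeAvg g ∅ - subcubeAvg g S|
        ≤ 1 / (n.choose k : ℝ) * (n.choose k * (2 * (√n - √(n - k)))) := by
          gcongr
          exact sum_powersetCard_abs_subcubeAvg_sub_le hg hkn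
      _ ≤ 2 * k / √n := by
          rw [← mul_assoc, one_div_mul_cancel hchoose.ne', one_mul, mul_div_assoc]
          gcongr
          exact sqrt_sub_sqrt_sub_le_div_sqrt (Nat.cast_nonneg k) (Nat.cast_le.2 hkn)
  · rw [powersetCard_eq_empty.2 (by simpa using hnk), sum_empty, mul_zero]
    positivity
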